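/- Let C > 0, δ₁ > 0 and let V : ℝ³ → ℝ be continuous, integrable, with 0 ≤ V(y) ≤ C·(1+|y|)^{−(3+δ₁)} for all y ∈ ℝ³. Then for every L > 0: ∫_{[−L/2,L/2)³} ( Σ_{n∈ℤ³} V(x + nL) )² dx ≤ ∫_{ℝ³} V(y)² dy + 2·(∫_{ℝ³} V(y) dy)·C·Σ_{k∈ℤ³, k≠0} (1 + |k|·L/2)^{−(3+δ₁)}. In particular ‖V_L‖_{L²(Λ_L)}² ≤ ‖V‖_{L²(ℝ³)}² + O(L^{−3−δ₁}) as L → ∞. -/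

import Mathlib

open scoped BigOperators
open MeasureTheory

noncomputable section

/-- Euclidean norm on `ℝ³`. -/
def rnorm (p : Fin 3 → ℝ) : ℝ := Real.sqrt (∑ i, (p i) ^ 2)

/-- Squared Euclidean norm of a lattice point `n ∈ ℤ³`. -/
def znormSq (n : Fin 3 → ℤ) : ℝ := ∑ i, ((n i : ℝ)) ^ 2

/-- The torus box `Λ_L = [−L/2, L/2)³ ⊂ ℝ³`. -/
def box (L : ℝ) : Set (Fin 3 → ℝ) :=
  Set.univ.pi fun _ => Set.Ico (-(L / 2)) (L / 2)

open scoped ENNReal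

/-! ### Auxiliary lemmas -/

def Tmap (L : ℝ) (n : Fin 3 → ℤ) : Fin 3 → ℝ := fun i => (n i : ℝ) * L

lemma Tmap_add (L : ℝ) (n k : Fin 3 → ℤ) : Tmap L (n + k) = Tmap L n + Tmap L k := by
  funext i; simp [Tmap]; push_cast; ring

lemma Tmap_zero (L : ℝ) : Tmap L 0 = 0 := by funext i; simp [Tmap]

lemma rnorm_nonneg (p : Fin 3 → ℝ) : 0 ≤ rnorm p := Real.sqrt_nonneg _

lemma rnorm_eq_norm (p : Fin 3 → ℝ) : rnorm p = ‖(WithLp.toLp 2 p : EuclideanSpace ℝ (Fin 3))‖ := by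
  rw [EuclideanSpace.norm_eq]
  simp [rnorm, Real.norm_eq_abs, sq_abs]

lemma rnorm_add_le (a b : Fin 3 → ℝ) : rnorm (a + b) ≤ rnorm a + rnorm b := by
  rw [rnorm_eq_norm, rnorm_eq_norm, rnorm_eq_norm]
  rw [WithLp.toLp_add]
  exact norm_add_le _ _

lemma rnorm_neg (a : Fin 3 → ℝ) : rnorm (-a) = rnorm a := by
  simp [rnorm]

lemma znormSq_nonneg (n : Fin 3 → ℤ) : 0 ≤ znormSq n := by
  unfold znormSq; positivity

lemma abs_le_sqrt_znormSq (n : Fin 3 → ℤ) (i : Fin 3) :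
    (|n i| : ℝ) ≤ Real.sqrt (znormSq n) := by
  have h1 : (|n i| : ℝ) = Real.sqrt (((n i : ℝ)) ^ 2) := by
    rw [Real.sqrt_sq_eq_abs]
  rw [h1]
  apply Real.sqrt_le_sqrt
  unfold znormSq
  exact Finset.single_le_sum (f := fun j => ((n j : ℝ))^2) (fun j _ => by positivity)
    (Finset.mem_univ i)

lemma rnorm_Tmap {L : ℝ} (hL : 0 < L) (k : Fin 3 → ℤ) :
    rnorm (Tmap L k) = Real.sqrt (znormSq k) * L := by
  unfold rnorm Tmap znormSq
  have h1 : ∑ i, ((k i : ℝ) * L) ^ 2 = (∑ i, ((k i : ℝ)) ^ 2) * L ^ 2 := by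
    rw [Finset.sum_mul]; congr 1; funext i; ring
  rw [h1, Real.sqrt_mul (by positivity) (L ^ 2), Real.sqrt_sq hL.le]

lemma sumZ {q : ℝ} (hq : 1 < q) : Summable (fun z : ℤ => ((1:ℝ) + |z|) ^ (-q)) := by
  have hnat : Summable (fun n : ℕ => ((1:ℝ) + n) ^ (-q)) := by
    have h := (Real.summable_nat_rpow (p := -q)).2 (by linarith)
    have h2 := h.comp_injective (add_right_injective 1)
    refine h2.congr fun n => ?_
    simp only [Function.comp]
    push_cast
    ring_nf
  apply Summable.of_nat_of_neg
  · refine hnat.congr fun n => ?_; simp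
  · refine hnat.congr fun n => ?_; simp

lemma sumProd {q : ℝ} (hq : 1 < q) :
    Summable (fun n : Fin 3 → ℤ => ∏ i, ((1:ℝ) + |n i|) ^ (-q)) := by
  have h := sumZ hq
  have hnn : ∀ z : ℤ, 0 ≤ ((1:ℝ) + |z|) ^ (-q) := fun z =>
    Real.rpow_nonneg (by positivity) _
  apply summable_of_sum_le (c := (∑' z : ℤ, ((1:ℝ) + |z|) ^ (-q)) ^ (3:ℕ))
  · intro n; positivity
  · intro u
    set h0 : ℤ → ℝ := fun z => ((1:ℝ) + |z|) ^ (-q) with hh0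
    set t : Fin 3 → Finset ℤ := fun i => u.image (fun n => n i) with ht
    have hsub : u ⊆ Fintype.piFinset t := by
      intro n hn
      simp only [Fintype.mem_piFinset, ht]
      intro i
      exact Finset.mem_image_of_mem _ hn
    calc ∑ n ∈ u, ∏ i, h0 (n i)
        ≤ ∑ n ∈ Fintype.piFinset t, ∏ i, h0 (n i) := by
          apply Finset.sum_le_sum_of_subset_of_nonneg hsub
          intro n _ _; positivity
      _ = ∏ i, ∑ z ∈ t i, h0 z := by rw [Finset.prod_univ_sum]
      _ ≤ ∏ i : Fin 3, ∑' z : ℤ, h0 z := by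
          apply Finset.prod_le_prod
          · intro i _; apply Finset.sum_nonneg; intro z _; exact hnn z
          · intro i _; exact Summable.sum_le_tsum _ (fun z _ => hnn z) h
      _ = (∑' z : ℤ, h0 z) ^ (3:ℕ) := by simp [Finset.prod_const]

lemma sumBeta {δ₁ : ℝ} (hδ : 0 < δ₁) {L : ℝ} (hL : 0 < L) :
    Summable (fun n : Fin 3 → ℤ =>
      (1 + Real.sqrt (znormSq n) * L / 2) ^ (-(3 + δ₁))) := by
  set q : ℝ := 1 + δ₁ / 3 with hq
  have hq1 : 1 < q := by rw [hq]; linarith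
  set c : ℝ := min (L / 2) 1 with hc
  have hc0 : 0 < c := by rw [hc]; positivity
  have hc1 : c ≤ 1 := min_le_right _ _
  have key : ∀ n : Fin 3 → ℤ,
      (1 + Real.sqrt (znormSq n) * L / 2) ^ (-(3 + δ₁))
        ≤ c ^ (-(3 + δ₁)) * ∏ i, ((1:ℝ) + |n i|) ^ (-q) := by
    intro n
    set s := Real.sqrt (znormSq n) with hs
    have hs0 : 0 ≤ s := Real.sqrt_nonneg _
    have step1 : c * (1 + s) ≤ 1 + s * L / 2 := by
      have h1 : c ≤ 1 := hc1
      have h2 : c * s ≤ (L/2) * s := mul_le_mul_of_nonneg_right (min_le_left _ _) hs0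
      nlinarith
    have hcs : 0 < c * (1 + s) := by positivity
    have step2 : (1 + s * L / 2) ^ (-(3 + δ₁)) ≤ (c * (1 + s)) ^ (-(3 + δ₁)) :=
      Real.rpow_le_rpow_of_nonpos hcs step1 (by linarith)
    have step3 : (c * (1 + s)) ^ (-(3 + δ₁))
        = c ^ (-(3 + δ₁)) * (1 + s) ^ (-(3 + δ₁)) :=
      Real.mul_rpow hc0.le (by linarith)
    have hA : (0:ℝ) < ∏ i : Fin 3, ((1:ℝ) + |n i|) := by positivity
    have hAle : (∏ i : Fin 3, ((1:ℝ) + |n i|)) ≤ (1 + s) ^ (3:ℕ) := by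
      have h3 : (1 + s) ^ (3:ℕ) = ∏ _i : Fin 3, (1 + s) := by simp [Finset.prod_const]
      rw [h3]
      apply Finset.prod_le_prod
      · intro i _; positivity
      · intro i _
        have := abs_le_sqrt_znormSq n i
        push_cast
        linarith
    have step4 : (1 + s) ^ (-(3 + δ₁))
        ≤ (∏ i : Fin 3, ((1:ℝ) + |n i|)) ^ (-q) := by
      have h1 : ((1 + s) ^ (3:ℕ)) ^ (-q) ≤ (∏ i : Fin 3, ((1:ℝ) + |n i|)) ^ (-q) :=
        Real.rpow_le_rpow_of_nonpos hA hAle (by linarith)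
      have h2 : ((1 + s) ^ (3:ℕ)) ^ (-q) = (1 + s) ^ (-(3 + δ₁)) := by
        rw [← Real.rpow_natCast (1 + s) 3, ← Real.rpow_mul (by linarith)]
        norm_num [hq]
        ring_nf
      linarith [h2 ▸ h1]
    have step5 : (∏ i : Fin 3, ((1:ℝ) + |n i|)) ^ (-q)
        = ∏ i : Fin 3, ((1:ℝ) + |n i|) ^ (-q) := by
      rw [← Real.finset_prod_rpow]
      intro i _; positivity
    have hcne : 0 ≤ c ^ (-(3 + δ₁)) := Real.rpow_nonneg hc0.le _
    calc (1 + s * L / 2) ^ (-(3 + δ₁)) ≤ c ^ (-(3 + δ₁)) * (1 + s) ^ (-(3 + δ₁)) := by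
          rw [← step3]; exact step2
      _ ≤ c ^ (-(3 + δ₁)) * ∏ i, ((1:ℝ) + |n i|) ^ (-q) := by
          apply mul_le_mul_of_nonneg_left _ hcne
          rw [← step5]; exact step4
  apply Summable.of_nonneg_of_le (fun n => Real.rpow_nonneg (by positivity) _) key
  exact (sumProd hq1).mul_left _

def shearEquiv : (Fin 3 → ℤ) × (Fin 3 → ℤ) ≃ (Fin 3 → ℤ) × (Fin 3 → ℤ) where
  toFun p := (p.1, p.1 + p.2)
  invFun p := (p.1, p.2 - p.1)
  left_inv p := by simp
  right_inv p := by simp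

lemma boxMeasurable (L : ℝ) : MeasurableSet (box L) :=
  MeasurableSet.univ_pi (fun _ => measurableSet_Ico)

lemma tsum_lintegral_box {L : ℝ} (hL : 0 < L) (F : (Fin 3 → ℝ) → ℝ≥0∞) :
    ∑' n : Fin 3 → ℤ, ∫⁻ x in box L, F (x + Tmap L n) = ∫⁻ x, F x := by
  set T : (Fin 3 → ℤ) → Fin 3 → ℝ := Tmap L with hT
  set S : (Fin 3 → ℤ) → Set (Fin 3 → ℝ) := fun n => (fun y => y - T n) ⁻¹' box L with hS
  have hSm : ∀ n, MeasurableSet (S n) := fun n =>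
    (boxMeasurable L).preimage (measurable_id.sub_const (T n))
  have hmem : ∀ (n : Fin 3 → ℤ) (y : Fin 3 → ℝ),
      y ∈ S n ↔ ∀ i, -(L/2) ≤ y i - (n i : ℝ) * L ∧ y i - (n i : ℝ) * L < L/2 := by
    intro n y
    simp only [hS, Set.mem_preimage, box, Set.mem_pi, Set.mem_univ, forall_true_left,
      Set.mem_Ico, Pi.sub_apply, hT, Tmap]
  have hcover : (⋃ n, S n) = Set.univ := by
    apply Set.eq_univ_of_forall
    intro y
    refine Set.mem_iUnion.2 ⟨fun i => ⌊y i / L + 1/2⌋, ?_⟩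
    rw [hmem]
    intro i
    have h1 : (⌊y i / L + 1/2⌋ : ℝ) ≤ y i / L + 1/2 := Int.floor_le _
    have h2 : y i / L + 1/2 < ⌊y i / L + 1/2⌋ + 1 := Int.lt_floor_add_one _
    have hal : (y i / L + 1/2) * L = y i + L/2 := by field_simp
    have h1' := mul_le_mul_of_nonneg_right h1 hL.le
    have h2' := mul_lt_mul_of_pos_right h2 hL
    rw [hal] at h1' h2'
    constructor
    · nlinarith
    · nlinarith
  have hdisj : Pairwise (Function.onFun Disjoint S) := by
    intro n m hnm
    rw [Function.onFun, Set.disjoint_left]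
    intro y hyn hym
    apply hnm
    funext i
    have h1 := (hmem n y).1 hyn i
    have h2 := (hmem m y).1 hym i
    have hlt : ((n i - m i : ℤ) : ℝ) * L < 1 * L := by push_cast; nlinarith
    have hgt : (-1 : ℝ) * L < ((n i - m i : ℤ) : ℝ) * L := by push_cast; nlinarith
    have h3 : ((n i - m i : ℤ) : ℝ) < 1 := lt_of_mul_lt_mul_right (by linarith) hL.le
    have h4 : (-1 : ℝ) < ((n i - m i : ℤ) : ℝ) := lt_of_mul_lt_mul_right (by linarith) hL.le
    have h5 : (n i - m i : ℤ) < 1 := by exact_mod_cast h3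
    have h6 : (-1 : ℤ) < (n i - m i : ℤ) := by exact_mod_cast h4
    omega
  have htrans : ∀ n : Fin 3 → ℤ, ∫⁻ y in S n, F y = ∫⁻ x in box L, F (x + T n) := by
    intro n
    have hmp : MeasurePreserving (fun x : Fin 3 → ℝ => x + T n) volume volume :=
      measurePreserving_add_right volume (T n)
    have hemb : MeasurableEmbedding (fun x : Fin 3 → ℝ => x + T n) :=
      (MeasurableEquiv.addRight (T n)).measurableEmbedding
    have key := hmp.setLIntegral_comp_emb hemb F (box L)
    have himg : (fun x : Fin 3 → ℝ => x + T n) '' box L = S n := by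
      ext y
      constructor
      · rintro ⟨x, hx, rfl⟩
        show x + T n - T n ∈ box L
        simpa [add_sub_cancel_right] using hx
      · intro hy
        exact ⟨y - T n, hy, by simp⟩
    rw [himg] at key
    exact key.symm
  calc ∑' n : Fin 3 → ℤ, ∫⁻ x in box L, F (x + T n)
      = ∑' n, ∫⁻ y in S n, F y := by
        refine tsum_congr fun n => ?_
        exact (htrans n).symm
    _ = ∫⁻ x in ⋃ n, S n, F x := (lintegral_iUnion hSm hdisj F).symm
    _ = ∫⁻ x, F x := by rw [hcover, Measure.restrict_univ]

/-- an `L²`-bound for the periodization of `V`: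
`∫_{Λ_L} (Σ_n V(x+nL))² dx ≤ ∫_{ℝ³} V² + 2(∫_{ℝ³} V)·C·Σ_{k≠0} (1+|k|L/2)^{−(3+δ₁)}`. -/
theorem stmt18 (C δ₁ : ℝ) (hC : 0 < C) (hδ : 0 < δ₁)
    (V : (Fin 3 → ℝ) → ℝ) (hVcont : Continuous V) (hVint : Integrable V)
    (hVbd : ∀ y, 0 ≤ V y ∧ V y ≤ C * (1 + rnorm y) ^ (-(3 + δ₁)))
    (L : ℝ) (hL : 0 < L) :
    ∫ x in box L, (∑' n : Fin 3 → ℤ, V (x + fun i => (n i : ℝ) * L)) ^ 2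
      ≤ (∫ y, (V y) ^ 2)
        + 2 * (∫ y, V y) * C *
            ∑' k : {k : Fin 3 → ℤ // k ≠ 0},
              (1 + Real.sqrt (znormSq (k : Fin 3 → ℤ)) * L / 2) ^ (-(3 + δ₁)) := by
  have hV0 : ∀ y, 0 ≤ V y := fun y => (hVbd y).1
  have hVm : Measurable V := hVcont.measurable
  set β : (Fin 3 → ℤ) → ℝ := fun k => (1 + Real.sqrt (znormSq k) * L / 2) ^ (-(3 + δ₁))
    with hβ
  have hβpos : ∀ k, (0:ℝ) < 1 + Real.sqrt (znormSq k) * L / 2 := by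
    intro k
    have := Real.sqrt_nonneg (znormSq k)
    positivity
  have hβ0 : ∀ k, 0 ≤ β k := fun k => Real.rpow_nonneg (hβpos k).le _
  have hβsum : Summable β := sumBeta hδ hL
  have hIV : 0 ≤ ∫ y, V y := integral_nonneg hV0
  have hVleC : ∀ y, V y ≤ C := by
    intro y
    refine le_trans (hVbd y).2 ?_
    have h1 : (1 + rnorm y) ^ (-(3 + δ₁)) ≤ 1 :=
      Real.rpow_le_one_of_one_le_of_nonpos (by linarith [rnorm_nonneg y]) (by linarith)
    nlinarith
  have hV2int : Integrable (fun y => V y ^ 2) := by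
    apply Integrable.mono' (hVint.const_mul C) ((hVcont.pow 2).aestronglyMeasurable)
    refine Filter.Eventually.of_forall fun y => ?_
    simp only [Pi.pow_apply]
    rw [Real.norm_eq_abs, abs_of_nonneg (by positivity)]
    have := hV0 y
    nlinarith [hVleC y]
  have hIV2 : 0 ≤ ∫ y, V y ^ 2 := integral_nonneg (fun y => by positivity)
  -- decay of V at controlled distance
  have hdecay : ∀ y : Fin 3 → ℝ, ∀ k : Fin 3 → ℤ,
      Real.sqrt (znormSq k) * L / 2 ≤ rnorm y → V y ≤ C * β k := by
    intro y k hyk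
    refine le_trans (hVbd y).2 ?_
    have h1 : (1 + rnorm y) ^ (-(3 + δ₁)) ≤ β k := by
      rw [hβ]
      exact Real.rpow_le_rpow_of_nonpos (hβpos k) (by linarith) (by linarith)
    nlinarith [Real.rpow_nonneg (by linarith [rnorm_nonneg y] : (0:ℝ) ≤ 1 + rnorm y) (-(3+δ₁))]
  -- lower bound for rnorm on translated box
  have hlow : ∀ x ∈ box L, ∀ n : Fin 3 → ℤ,
      Real.sqrt (znormSq n) * L / 2 ≤ rnorm (x + Tmap L n) := by
    intro x hx n
    have hxi : ∀ i, |x i| ≤ L / 2 := by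
      intro i
      have := hx i (Set.mem_univ i)
      rw [Set.mem_Ico] at this
      rw [abs_le]
      constructor <;> linarith [this.1, this.2]
    have hterm : ∀ i, ((n i : ℝ))^2 * (L/2)^2 ≤ ((x + Tmap L n) i)^2 := by
      intro i
      rcases eq_or_ne (n i) 0 with h0 | h0
      · have hz : ((n i : ℝ))^2 * (L/2)^2 = 0 := by rw [h0]; norm_num
        rw [hz]; positivity
      · have h1 : (1:ℝ) ≤ |(n i : ℝ)| := by
          rw [← Int.cast_abs]
          exact_mod_cast Int.one_le_abs h0
        have h2 : |(n i : ℝ)| * L - L/2 ≤ |x i + (n i : ℝ) * L| := by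
          have h3 : |(n i : ℝ) * L| ≤ |x i + (n i : ℝ) * L| + |x i| := by
            calc |(n i : ℝ) * L| = |(x i + (n i : ℝ) * L) - x i| := by ring_nf
              _ ≤ |x i + (n i : ℝ) * L| + |x i| := abs_sub _ _
          rw [abs_mul, abs_of_pos hL] at h3
          linarith [hxi i]
        have h4 : |(n i : ℝ)| * (L/2) ≤ |x i + (n i : ℝ) * L| := by nlinarith
        have h5 : (|(n i : ℝ)| * (L/2))^2 ≤ (|x i + (n i : ℝ) * L|)^2 := by
          apply pow_le_pow_left₀ (by positivity) h4
        rw [mul_pow, sq_abs, sq_abs] at h5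
        exact h5
    have hsum : znormSq n * (L/2)^2 ≤ ∑ i, ((x + Tmap L n) i)^2 := by
      rw [znormSq, Finset.sum_mul]
      exact Finset.sum_le_sum fun i _ => hterm i
    have := Real.sqrt_le_sqrt hsum
    rw [Real.sqrt_mul (znormSq_nonneg n) ((L/2)^2), Real.sqrt_sq (by positivity)] at this
    calc Real.sqrt (znormSq n) * L / 2 = Real.sqrt (znormSq n) * (L/2) := by ring
      _ ≤ Real.sqrt (∑ i, ((x + Tmap L n) i)^2) := this
      _ = rnorm (x + Tmap L n) := rfl
  have hfb : ∀ x ∈ box L, ∀ n : Fin 3 → ℤ, V (x + Tmap L n) ≤ C * β n :=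
    fun x hx n => hdecay _ n (hlow x hx n)
  have hsumx : ∀ x ∈ box L, Summable (fun n : Fin 3 → ℤ => V (x + Tmap L n)) := by
    intro x hx
    exact Summable.of_nonneg_of_le (fun n => hV0 _) (hfb x hx) (hβsum.mul_left C)
  -- the cross-term pointwise bound
  have hcross : ∀ (k : Fin 3 → ℤ) (y : Fin 3 → ℝ),
      V y * V (y + Tmap L k) ≤ C * β k * (V y + V (y + Tmap L k)) := by
    intro k y
    have htri : rnorm (Tmap L k) ≤ rnorm (y + Tmap L k) + rnorm y := by
      have h1 : Tmap L k = (y + Tmap L k) + (-y) := by abel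
      calc rnorm (Tmap L k) = rnorm ((y + Tmap L k) + (-y)) := by rw [← h1]
        _ ≤ rnorm (y + Tmap L k) + rnorm (-y) := rnorm_add_le _ _
        _ = rnorm (y + Tmap L k) + rnorm y := by rw [rnorm_neg]
    rw [rnorm_Tmap hL] at htri
    have hCβ : 0 ≤ C * β k := by positivity
    rcases le_total (Real.sqrt (znormSq k) * L / 2) (rnorm y) with hcase | hcase
    · have h1 : V y ≤ C * β k := hdecay y k hcase
      calc V y * V (y + Tmap L k) ≤ (C * β k) * V (y + Tmap L k) :=
            mul_le_mul_of_nonneg_right h1 (hV0 _)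
        _ ≤ C * β k * (V y + V (y + Tmap L k)) := by
            apply mul_le_mul_of_nonneg_left _ hCβ
            linarith [hV0 y]
    · have hge : Real.sqrt (znormSq k) * L / 2 ≤ rnorm (y + Tmap L k) := by linarith
      have h1 : V (y + Tmap L k) ≤ C * β k := hdecay _ k hge
      calc V y * V (y + Tmap L k) ≤ V y * (C * β k) :=
            mul_le_mul_of_nonneg_left h1 (hV0 _)
        _ = (C * β k) * V y := by ring
        _ ≤ C * β k * (V y + V (y + Tmap L k)) := by
            apply mul_le_mul_of_nonneg_left _ hCβ
            linarith [hV0 (y + Tmap L k)]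
  -- ENNReal-valued functions
  set fE : (Fin 3 → ℤ) → (Fin 3 → ℝ) → ℝ≥0∞ :=
    fun n x => ENNReal.ofReal (V (x + Tmap L n)) with hfE
  set gE : (Fin 3 → ℝ) → ℝ≥0∞ := fun x => ∑' n, fE n x with hgE
  have hfEm : ∀ n, Measurable (fE n) := fun n =>
    ENNReal.measurable_ofReal.comp (hVm.comp (measurable_id.add_const (Tmap L n)))
  have hgEm : Measurable gE := Measurable.ennreal_tsum hfEm
  have hgEofReal : ∀ x ∈ box L,
      ENNReal.ofReal (∑' n : Fin 3 → ℤ, V (x + Tmap L n)) = gE x := by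
    intro x hx
    rw [hgE]
    exact ENNReal.ofReal_tsum_of_nonneg (fun n => hV0 _) (hsumx x hx)
  -- Step 1 : express the LHS via a lintegral
  have step1 : ∫ x in box L, (∑' n : Fin 3 → ℤ, V (x + Tmap L n)) ^ 2
      = (∫⁻ x in box L, gE x ^ 2).toReal := by
    have hnn : 0 ≤ᵐ[volume.restrict (box L)]
        fun x => (∑' n : Fin 3 → ℤ, V (x + Tmap L n)) ^ 2 :=
      Filter.Eventually.of_forall fun x => by positivity
    have haemem := ae_restrict_mem (μ := volume) (boxMeasurable L)
    have hae : (fun x => (∑' n : Fin 3 → ℤ, V (x + Tmap L n)) ^ 2)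
        =ᵐ[volume.restrict (box L)] fun x => ((gE x).toReal) ^ 2 := by
      filter_upwards [haemem] with x hx
      rw [← hgEofReal x hx, ENNReal.toReal_ofReal (tsum_nonneg fun n => hV0 _)]
    have hmeas : AEStronglyMeasurable
        (fun x => (∑' n : Fin 3 → ℤ, V (x + Tmap L n)) ^ 2) (volume.restrict (box L)) := by
      refine AEStronglyMeasurable.congr ?_ hae.symm
      exact ((hgEm.ennreal_toReal.pow_const 2).aestronglyMeasurable)
    rw [integral_eq_lintegral_of_nonneg_ae hnn hmeas]
    congr 1
    apply lintegral_congr_ae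
    filter_upwards [haemem] with x hx
    rw [ENNReal.ofReal_pow (tsum_nonneg fun n => hV0 _), hgEofReal x hx]
  -- Step 2 : expand the square into a double sum
  have step2 : ∫⁻ x in box L, gE x ^ 2
      = ∑' p : (Fin 3 → ℤ) × (Fin 3 → ℤ), ∫⁻ x in box L, fE p.1 x * fE p.2 x := by
    have hpt : ∀ x, gE x ^ 2 = ∑' p : (Fin 3 → ℤ) × (Fin 3 → ℤ), fE p.1 x * fE p.2 x := by
      intro x
      rw [sq, ENNReal.tsum_prod']
      calc gE x * gE x = ∑' n, fE n x * gE x := by rw [ENNReal.tsum_mul_right]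
        _ = ∑' (n) (m), fE n x * fE m x := by
            refine tsum_congr fun n => ?_
            rw [ENNReal.tsum_mul_left]
    simp_rw [hpt]
    rw [lintegral_tsum]
    intro p
    exact ((hfEm p.1).mul (hfEm p.2)).aemeasurable
  -- Step 3 : reindex the double sum by (n, k) ↦ (n, n + k)
  have step3 : ∑' p : (Fin 3 → ℤ) × (Fin 3 → ℤ), ∫⁻ x in box L, fE p.1 x * fE p.2 x
      = ∑' k : Fin 3 → ℤ, ∑' n : Fin 3 → ℤ, ∫⁻ x in box L, fE n x * fE (n + k) x := by
    calc ∑' p : (Fin 3 → ℤ) × (Fin 3 → ℤ), ∫⁻ x in box L, fE p.1 x * fE p.2 x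
        = ∑' p : (Fin 3 → ℤ) × (Fin 3 → ℤ), ∫⁻ x in box L, fE p.1 x * fE (p.1 + p.2) x :=
          (shearEquiv.tsum_eq (fun p => ∫⁻ x in box L, fE p.1 x * fE p.2 x)).symm
      _ = ∑' (n : Fin 3 → ℤ) (k : Fin 3 → ℤ), ∫⁻ x in box L, fE n x * fE (n + k) x :=
          ENNReal.tsum_prod'
      _ = ∑' (k : Fin 3 → ℤ) (n : Fin 3 → ℤ), ∫⁻ x in box L, fE n x * fE (n + k) x :=
          ENNReal.tsum_comm
  -- Step 4 : for each k, resum over n into an integral over all of ℝ³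
  have step4 : ∀ k : Fin 3 → ℤ,
      ∑' n : Fin 3 → ℤ, ∫⁻ x in box L, fE n x * fE (n + k) x
        = ∫⁻ y, ENNReal.ofReal (V y * V (y + Tmap L k)) := by
    intro k
    rw [← tsum_lintegral_box hL (fun y => ENNReal.ofReal (V y * V (y + Tmap L k)))]
    refine tsum_congr fun n => ?_
    apply lintegral_congr
    intro x
    rw [hfE]
    simp only []
    rw [← ENNReal.ofReal_mul (hV0 _)]
    congr 2
    rw [Tmap_add, ← add_assoc]
  -- Step 5 : the diagonal term
  have step5 : ∫⁻ y, ENNReal.ofReal (V y * V (y + Tmap L 0))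
      = ENNReal.ofReal (∫ y, V y ^ 2) := by
    have h0 : ∀ y : Fin 3 → ℝ, y + Tmap L 0 = y := by
      intro y; rw [Tmap_zero, add_zero]
    simp_rw [h0, ← sq]
    exact (ofReal_integral_eq_lintegral_ofReal hV2int
      (Filter.Eventually.of_forall fun y => by positivity)).symm
  -- Step 6 : off-diagonal bound
  have step6 : ∀ k : Fin 3 → ℤ,
      ∫⁻ y, ENNReal.ofReal (V y * V (y + Tmap L k))
        ≤ ENNReal.ofReal (2 * (∫ y, V y) * C * β k) := by
    intro k
    have hshift : Integrable (fun y => V (y + Tmap L k)) := hVint.comp_add_right (Tmap L k)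
    have hint : Integrable (fun y => C * β k * (V y + V (y + Tmap L k))) :=
      (hVint.add hshift).const_mul _
    have hb : ∫⁻ y, ENNReal.ofReal (V y * V (y + Tmap L k))
        ≤ ∫⁻ y, ENNReal.ofReal (C * β k * (V y + V (y + Tmap L k))) := by
      apply lintegral_mono
      intro y
      exact ENNReal.ofReal_le_ofReal (hcross k y)
    refine le_trans hb ?_
    rw [← ofReal_integral_eq_lintegral_ofReal hint
      (Filter.Eventually.of_forall fun y => by
        have := hV0 y; have := hV0 (y + Tmap L k); positivity)]
    apply ENNReal.ofReal_le_ofReal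
    rw [integral_const_mul, integral_add hVint hshift, integral_add_right_eq_self]
    exact le_of_eq (by ring)
  -- Step 7 : split off k = 0 and sum the bounds
  set c : (Fin 3 → ℤ) → ℝ≥0∞ :=
    fun k => ∫⁻ y, ENNReal.ofReal (V y * V (y + Tmap L k)) with hcdef
  have step7 : ∑' k, c k ≤ ENNReal.ofReal ((∫ y, V y ^ 2)
      + 2 * (∫ y, V y) * C * ∑' k : {k : Fin 3 → ℤ // k ≠ 0}, β (k : Fin 3 → ℤ)) := by
    have hsplit : ∑' k, c k = c 0 + ∑' k : {k : Fin 3 → ℤ // k ≠ 0}, c (k : Fin 3 → ℤ) := by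
      rw [ENNReal.tsum_eq_add_tsum_ite (0 : Fin 3 → ℤ)]
      congr 1
      refine ((tsum_subtype {k : Fin 3 → ℤ | k ≠ 0} c).trans ?_).symm
      refine tsum_congr fun k => ?_
      by_cases hk : k = 0 <;> simp [Set.indicator_apply, hk]
    have hsumsub : Summable (fun k : {k : Fin 3 → ℤ // k ≠ 0} =>
        2 * (∫ y, V y) * C * β (k : Fin 3 → ℤ)) :=
      ((hβsum.mul_left (2 * (∫ y, V y) * C)).subtype _)
    have hboundsum : ∑' k : {k : Fin 3 → ℤ // k ≠ 0}, c (k : Fin 3 → ℤ)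
        ≤ ENNReal.ofReal (2 * (∫ y, V y) * C
            * ∑' k : {k : Fin 3 → ℤ // k ≠ 0}, β (k : Fin 3 → ℤ)) := by
      calc ∑' k : {k : Fin 3 → ℤ // k ≠ 0}, c (k : Fin 3 → ℤ)
          ≤ ∑' k : {k : Fin 3 → ℤ // k ≠ 0},
              ENNReal.ofReal (2 * (∫ y, V y) * C * β (k : Fin 3 → ℤ)) :=
            ENNReal.tsum_le_tsum fun k => step6 (k : Fin 3 → ℤ)
        _ = ENNReal.ofReal (∑' k : {k : Fin 3 → ℤ // k ≠ 0},
              2 * (∫ y, V y) * C * β (k : Fin 3 → ℤ)) :=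
            (ENNReal.ofReal_tsum_of_nonneg
              (fun k => by have := hβ0 (k : Fin 3 → ℤ); positivity) hsumsub).symm
        _ = ENNReal.ofReal (2 * (∫ y, V y) * C
              * ∑' k : {k : Fin 3 → ℤ // k ≠ 0}, β (k : Fin 3 → ℤ)) := by
            rw [tsum_mul_left]
    calc ∑' k, c k = c 0 + ∑' k : {k : Fin 3 → ℤ // k ≠ 0}, c (k : Fin 3 → ℤ) := hsplit
      _ ≤ ENNReal.ofReal (∫ y, V y ^ 2)
            + ENNReal.ofReal (2 * (∫ y, V y) * C
              * ∑' k : {k : Fin 3 → ℤ // k ≠ 0}, β (k : Fin 3 → ℤ)) := by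
          apply add_le_add _ hboundsum
          exact le_of_eq step5
      _ = ENNReal.ofReal ((∫ y, V y ^ 2)
            + 2 * (∫ y, V y) * C * ∑' k : {k : Fin 3 → ℤ // k ≠ 0}, β (k : Fin 3 → ℤ)) := by
          rw [← ENNReal.ofReal_add hIV2]
          have hB : 0 ≤ ∑' k : {k : Fin 3 → ℤ // k ≠ 0}, β (k : Fin 3 → ℤ) :=
            tsum_nonneg fun k => hβ0 _
          positivity
  -- Put everything together
  have hRHS0 : 0 ≤ (∫ y, V y ^ 2)
      + 2 * (∫ y, V y) * C * ∑' k : {k : Fin 3 → ℤ // k ≠ 0}, β (k : Fin 3 → ℤ) := by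
    have hB : 0 ≤ ∑' k : {k : Fin 3 → ℤ // k ≠ 0}, β (k : Fin 3 → ℤ) :=
      tsum_nonneg fun k => hβ0 _
    positivity
  have hmain : ∫ x in box L, (∑' n : Fin 3 → ℤ, V (x + Tmap L n)) ^ 2
      ≤ (∫ y, V y ^ 2)
        + 2 * (∫ y, V y) * C * ∑' k : {k : Fin 3 → ℤ // k ≠ 0}, β (k : Fin 3 → ℤ) := by
    rw [step1]
    apply ENNReal.toReal_le_of_le_ofReal hRHS0
    calc ∫⁻ x in box L, gE x ^ 2
        = ∑' k, c k := by rw [step2, step3]; exact tsum_congr fun k => step4 k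
      _ ≤ _ := step7
  exact hmain


end
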